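/- arXiv:2003.08049 — 7 statements merged into one kernel-verified Lean document; each statement's English description precedes it below -/
import Mathlib

section
/- Let b : ℕ → ℕ → ℚ be defined by b(1,1) = 1, b(n,m) = 0 whenever n < m or m = 0 or n = 0, and for n ≥ 2 and 1 ≤ m ≤ n, b(n,m) = (2n + m - 2) * ∑_{k=1}^{m} b(n-1,k). Then for all n ≥ 2 and 0 ≤ m ≤ n with m ≥ 1, b satisfies the recurrence b(n,m) = ((2n+m-2)/(2n+m-3)) * b(n,m-1) + (2n+m-2) * b(n-1,m). -/
/-!
With `S(m) = ∑_{k=1}^m b(n-1,k)` the definition reads `b(n,m) = (2n+m-2) S(m)`, also at `m = 0`.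
Substituting `S(m-1) = b(n,m-1) / (2n+m-3)` into `S(m) = S(m-1) + b(n-1,m)` gives the recurrence.
-/

/-- The double sequence `b(n,m)` from the enumeration of tree-child networks:
`b(1,1) = 1`, `b(n,m) = 0` if `n < m` or `m = 0` or `n = 0`, and for `n ≥ 2`,
`1 ≤ m ≤ n`, `b(n,m) = (2n+m-2) * ∑_{k=1}^m b(n-1,k)`. -/
def bseq : ℕ → ℕ → ℚ
  | 0, _ => 0
  | 1, m => if m = 1 then 1 else 0
  | n+2, m =>
      if m = 0 ∨ n + 2 < m then 0
      else ((2*(n+2)+m-2 : ℕ) : ℚ) * ∑ k ∈ Finset.Icc 1 m, bseq (n+1) k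

lemma bseq_add_two_eq_mul_sum (N m : ℕ) (hm : m ≤ N + 2) :
    bseq (N + 2) m = ((2 * N + 2 + m : ℕ) : ℚ) * ∑ k ∈ Finset.Icc 1 m, bseq (N + 1) k := by
  rw [bseq]
  split_ifs with h
  · obtain rfl : m = 0 := by omega
    simp
  · congr 3
    omega

lemma bseq_add_two_succ (N j : ℕ) (hj : j + 1 ≤ N + 2) :
    bseq (N + 2) (j + 1) = ((2 * N + 2 + (j + 1) : ℕ) : ℚ) / ((2 * N + 2 + j : ℕ) : ℚ)
        * bseq (N + 2) j + ((2 * N + 2 + (j + 1) : ℕ) : ℚ) * bseq (N + 1) (j + 1) := by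
  have hc : ((2 * N + 2 + j : ℕ) : ℚ) ≠ 0 := by positivity
  rw [bseq_add_two_eq_mul_sum N (j + 1) hj, bseq_add_two_eq_mul_sum N j (by omega),
    Finset.sum_Icc_succ_top (by omega)]
  field_simp

theorem bseq_two_term_recurrence (n m : ℕ) (hn : 2 ≤ n) (hm1 : 1 ≤ m) (hmn : m ≤ n) :
    bseq n m = (((2*n+m-2 : ℕ) : ℚ) / ((2*n+m-3 : ℕ) : ℚ)) * bseq n (m-1)
      + ((2*n+m-2 : ℕ) : ℚ) * bseq (n-1) m := by
  obtain ⟨N, rfl⟩ : ∃ N, n = N + 2 := ⟨n - 2, by omega⟩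
  obtain ⟨j, rfl⟩ : ∃ j, m = j + 1 := ⟨m - 1, by omega⟩
  rw [show 2 * (N + 2) + (j + 1) - 2 = 2 * N + 2 + (j + 1) by omega,
    show 2 * (N + 2) + (j + 1) - 3 = 2 * N + 2 + j by omega]
  exact bseq_add_two_succ N j hmn
end

section
/- Let a(n) = ∑_{m=1}^{n} b(n,m), where b is defined by b(1,1) = 1, b(n,m) = 0 for n < m or m = 0, and b(n,m) = (2n + m - 2) * ∑_{k=1}^{m} b(n-1,k) for n ≥ 2, 1 ≤ m ≤ n. Then for all n ≥ 1, a(n) ≤ 3^n * n! * Catalan(n), where Catalan(n) = C(2n,n)/(n+1). -/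
/-- `a(n) = ∑_{m=1}^n b(n,m)`, the number of words in the class 𝒜ₙ (OEIS A213863). -/
def aseq (n : ℕ) : ℚ := ∑ m ∈ Finset.Icc 1 n, bseq n m

/-- ballot numbers -/
def gb : ℕ → ℕ → ℚ
  | _, 0 => 0
  | _, 1 => 1
  | n, (m+2) => (Nat.choose (n+m) (m+1) : ℚ) - (Nat.choose (n+m) m : ℚ)

lemma gb_nonneg (n m : ℕ) (hm : m ≤ n + 1) : 0 ≤ gb n m := by
  match m with
  | 0 => simp [gb]
  | 1 => simp [gb]
  | b+2 =>
    simp only [gb, sub_nonneg]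
    have hb : b + 1 ≤ n := by omega
    rcases eq_or_lt_of_le hb with h | h
    · have e : n + b = 2*b+1 := by omega
      rw [e]
      have h1 : (2*b+1).choose ((2*b+1)-b) = (2*b+1).choose b :=
        Nat.choose_symm (by omega)
      rw [show (2*b+1)-b = b+1 from by omega] at h1
      rw [h1]
    · have : b < (n + b) / 2 := by omega
      exact_mod_cast Nat.choose_le_succ_of_lt_half_left this

lemma gb_pascal (a b : ℕ) : gb (a+2) (b+1) + gb (a+1) (b+2) = gb (a+2) (b+2) := by
  match b with
  | 0 => simp [gb]; ring
  | c+1 =>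
    simp only [gb]
    have e1 : (Nat.choose (a+c+3) (c+2) : ℚ)
        = Nat.choose (a+c+2) (c+1) + Nat.choose (a+c+2) (c+2) := by
      have := Nat.choose_succ_succ' (a+c+2) (c+1)
      rw [show a+c+2+1 = a+c+3 from by omega, show c+1+1 = c+2 from by omega] at this
      exact_mod_cast this
    have e2 : (Nat.choose (a+c+3) (c+1) : ℚ)
        = Nat.choose (a+c+2) c + Nat.choose (a+c+2) (c+1) := by
      have := Nat.choose_succ_succ' (a+c+2) c
      rw [show a+c+2+1 = a+c+3 from by omega] at this
      exact_mod_cast this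
    rw [show a+2+c = a+c+2 from by omega, show a+1+(c+1) = a+c+2 from by omega,
      show a+2+(c+1) = a+c+3 from by omega, e1, e2]
    ring

lemma gb_sum (n m : ℕ) (hn : 1 ≤ n) (hm : 1 ≤ m) :
    ∑ k ∈ Finset.Icc 1 m, gb n k = gb (n+1) m := by
  obtain ⟨a, rfl⟩ : ∃ a, n = a + 1 := ⟨n - 1, by omega⟩
  induction m with
  | zero => omega
  | succ b ih =>
    rcases Nat.eq_or_lt_of_le hm with h | h
    · simp [← h, gb]
    · have hb : 1 ≤ b := by omega
      rw [Finset.sum_Icc_succ_top (by omega), ih hb]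
      obtain ⟨c, rfl⟩ : ∃ c, b = c + 1 := ⟨b - 1, by omega⟩
      exact gb_pascal a c

lemma bseq_nonneg : ∀ n m, 0 ≤ bseq n m := by
  intro n
  induction n using Nat.strong_induction_on with
  | _ n ih =>
    match n with
    | 0 => intro m; simp [bseq]
    | 1 => intro m; simp only [bseq]; split <;> norm_num
    | n+2 =>
      intro m
      rw [bseq]
      split
      · exact le_refl 0
      · exact mul_nonneg (by positivity) (Finset.sum_nonneg fun k _ => ih (n+1) (by omega) k)

lemma bseq_bound (n : ℕ) (hn : 1 ≤ n) : ∀ m, m ≤ n + 1 →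
    bseq n m ≤ 3^(n-1) * (Nat.factorial n : ℚ) * gb n m := by
  induction n, hn using Nat.le_induction with
  | base =>
    intro m hm
    interval_cases m <;> simp [bseq, gb, Nat.factorial]
  | succ n hn ih =>
    intro m hm
    obtain ⟨N, rfl⟩ : ∃ N, n = N + 1 := ⟨n - 1, by omega⟩
    rw [show N+1+1 = N+2 from rfl, bseq]
    split
    · exact mul_nonneg (by positivity) (gb_nonneg _ _ (by omega))
    · rename_i h
      push_neg at h
      obtain ⟨hm1, hm2⟩ := h
      have hm1 : 1 ≤ m := by omega
      have hm2 : m ≤ N + 2 := by omega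
      have hsum : ∑ k ∈ Finset.Icc 1 m, bseq (N+1) k
          ≤ 3^N * (Nat.factorial (N+1) : ℚ) * gb (N+2) m := by
        rw [show N+2 = (N+1)+1 from rfl, ← gb_sum (N+1) m (by omega) hm1, Finset.mul_sum]
        refine Finset.sum_le_sum fun k hk => ?_
        have hk2 : k ≤ (N+1) + 1 := (Finset.mem_Icc.mp hk).2.trans hm2
        simpa using ih k hk2
      have hcoef : ((2*(N+2)+m-2 : ℕ) : ℚ) ≤ 3 * (N+2 : ℚ) := by
        have h0 : (2*(N+2)+m-2 : ℕ) ≤ 3*(N+2) := by omega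
        calc ((2*(N+2)+m-2 : ℕ) : ℚ) ≤ ((3*(N+2) : ℕ) : ℚ) := by exact_mod_cast h0
          _ = 3 * (N+2 : ℚ) := by push_cast; ring
      have hs0 : 0 ≤ ∑ k ∈ Finset.Icc 1 m, bseq (N+1) k :=
        Finset.sum_nonneg fun k _ => bseq_nonneg _ _
      calc ((2*(N+2)+m-2 : ℕ) : ℚ) * ∑ k ∈ Finset.Icc 1 m, bseq (N+1) k
          ≤ 3 * (N+2 : ℚ) * ∑ k ∈ Finset.Icc 1 m, bseq (N+1) k :=
            mul_le_mul_of_nonneg_right hcoef hs0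
        _ ≤ 3 * (N+2 : ℚ) * (3^N * (Nat.factorial (N+1) : ℚ) * gb (N+2) m) :=
            mul_le_mul_of_nonneg_left hsum (by positivity)
        _ = 3^(N+2-1) * (Nat.factorial (N+2) : ℚ) * gb (N+2) m := by
            rw [show N+2-1 = N+1 from rfl, Nat.factorial_succ (N+1)]
            push_cast
            ring

theorem aseq_le_catalan_bound (n : ℕ) (hn : 1 ≤ n) :
    aseq n ≤ (3 ^ n : ℚ) * (Nat.factorial n : ℚ)
      * ((Nat.choose (2 * n) n : ℚ) / ((n : ℚ) + 1)) := by
  obtain ⟨p, rfl⟩ : ∃ p, n = p + 1 := ⟨n - 1, by omega⟩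
  have step1 : aseq (p+1) ≤ 3^p * (Nat.factorial (p+1) : ℚ) * gb (p+2) (p+2) := by
    have h1 : aseq (p+1) ≤ 3^p * (Nat.factorial (p+1) : ℚ) * ∑ m ∈ Finset.Icc 1 (p+1), gb (p+1) m := by
      rw [aseq, Finset.mul_sum]
      refine Finset.sum_le_sum fun m hm => ?_
      have := bseq_bound (p+1) (by omega) m (by
        have := (Finset.mem_Icc.mp hm).2; omega)
      simpa using this
    have h2 : ∑ m ∈ Finset.Icc 1 (p+1), gb (p+1) m ≤ gb (p+2) (p+2) := by
      rw [show p+2 = (p+1)+1 from rfl, ← gb_sum (p+1) (p+2) (by omega) (by omega)]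
      rw [Finset.sum_Icc_succ_top (by omega : 1 ≤ p+2)]
      have := gb_nonneg (p+1) (p+2) (by omega)
      linarith
    calc aseq (p+1) ≤ 3^p * (Nat.factorial (p+1) : ℚ) * ∑ m ∈ Finset.Icc 1 (p+1), gb (p+1) m := h1
      _ ≤ 3^p * (Nat.factorial (p+1) : ℚ) * gb (p+2) (p+2) := by
          exact mul_le_mul_of_nonneg_left h2 (by positivity)
  have hgb : gb (p+2) (p+2) = (Nat.choose (2*(p+1)) (p+1) : ℚ) / ((p:ℚ)+1+1) := by
    have key : (Nat.choose (2*p+2) (p+1) : ℚ) * (p+1) = (Nat.choose (2*p+2) p : ℚ) * (p+2) := by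
      have := Nat.choose_succ_right_eq (2*p+2) p
      rw [show 2*p+2 - p = p+2 from by omega] at this
      exact_mod_cast this
    simp only [gb]
    rw [show p+2+p = 2*p+2 from by omega, show 2*(p+1) = 2*p+2 from by omega]
    have hp2 : ((p:ℚ)+1+1) ≠ 0 := by positivity
    field_simp
    nlinarith [key]
  have final : aseq (p+1) ≤ 3^(p+1) * (Nat.factorial (p+1) : ℚ)
      * ((Nat.choose (2*(p+1)) (p+1) : ℚ) / ((p:ℚ)+1+1)) := by
    rw [hgb] at step1
    refine step1.trans ?_
    have h3 : (3:ℚ)^p ≤ 3^(p+1) := by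
      apply pow_le_pow_right₀ (by norm_num) (by omega)
    have hC : (0:ℚ) ≤ (Nat.choose (2*(p+1)) (p+1) : ℚ) / ((p:ℚ)+1+1) := by positivity
    have hF : (0:ℚ) ≤ (Nat.factorial (p+1) : ℚ) := by positivity
    apply mul_le_mul_of_nonneg_right _ hC
    exact mul_le_mul_of_nonneg_right h3 hF
  convert final using 3
  push_cast
  ring
end

section
/- Fix n ≥ 1 and define p(ℓ,m) for 0 ≤ ℓ ≤ 2n, m ≥ -1 by: p(ℓ,-1) = 0, p(2n,m) = 0 for m ≥ 1, p(2n,0) = 1, and for ℓ < 2n, m ≥ 0: p(ℓ,m) = ((3ℓ+m)/(3ℓ+3m+6)) * p(ℓ+1,m+1) + ((3ℓ+m-2)/(3ℓ+m-4)) * p(ℓ+1,m-1) (interpreting the second term as 0 when m = 0 since p(ℓ+1,-1) = 0, and assuming 3ℓ+m-4 ≠ 0 when m ≥ 1). Then for all 0 ≤ j < k ≤ ℓ ≤ 2n with k - j even, p(ℓ,j)/(j+1)² ≥ p(ℓ,k)/(k+1)². -/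
/-!
Reverse induction on `ℓ` proves the two-step inequality `p(ℓ,m+2)(m+1)² ≤ p(ℓ,m)(m+3)²`.
Expanding both sides by the recurrence and applying it at level `ℓ+1` to the pairs
`(m+1, m+3)` and `(m-1, m+1)` leaves an inequality between the step weights alone; after clearing
denominators it is a polynomial in `m` and `ℓ - m - 2` with positive coefficients. Allowing
`m = -1`, where it is trivial because `p(ℓ,-1) = 0`, lets `m = 0` go through the same step.
The theorem follows by chaining these inequalities.
-/

/-- Weighted lattice path count `p(ℓ,m)` = weighted number of lattice paths from `(ℓ,m)`
to `(2n,0)` with up-steps `(1,1)` of weight `(3a+b)/(3a+3b+6)` and down-steps `(1,-1)` of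
weight `(3a+b-2)/(3a+b-4)` when starting at `(a,b)`; defined by the backwards recurrence
`p(ℓ,m) = ((3ℓ+m)/(3ℓ+3m+6))·p(ℓ+1,m+1) + ((3ℓ+m-2)/(3ℓ+m-4))·p(ℓ+1,m-1)` with
`p(ℓ,-1) = 0`, `p(2n,0) = 1`, `p(2n,m) = 0` for `m ≥ 1`. -/
noncomputable def latticeP (n : ℕ) : ℕ → ℤ → ℚ := fun ℓ m =>
  if m < 0 then 0
  else if h : 2 * n ≤ ℓ then (if m = 0 then 1 else 0)
  else ((3 * (ℓ : ℚ) + (m : ℚ)) / (3 * (ℓ : ℚ) + 3 * (m : ℚ) + 6)) * latticeP n (ℓ + 1) (m + 1)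
    + ((3 * (ℓ : ℚ) + (m : ℚ) - 2) / (3 * (ℓ : ℚ) + (m : ℚ) - 4)) * latticeP n (ℓ + 1) (m - 1)
  termination_by ℓ _ => 2 * n - ℓ
  decreasing_by all_goals omega

section Weights

variable {K : Type*} [Field K]

def upWeight (a b : K) : K := (3 * a + b) / (3 * a + 3 * b + 6)

def downWeight (a b : K) : K := (3 * a + b - 2) / (3 * a + b - 4)

variable [LinearOrder K] [IsStrictOrderedRing K] {a b : K}

theorem upWeight_nonneg (ha : 0 ≤ a) (hb : 0 ≤ b) : 0 ≤ upWeight a b := by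
  unfold upWeight; positivity

theorem downWeight_nonneg (h : 4 ≤ 3 * a + b) : 0 ≤ downWeight a b :=
  div_nonneg (by linarith) (by linarith)

theorem sq_mul_weights_le (hb : 0 ≤ b) (hab : b + 2 ≤ a) :
    (b + 1) ^ 2 *
        (upWeight a (b + 2) * (b + 4) ^ 2 + downWeight a (b + 2) * (b + 2) ^ 2) ≤
      (b + 3) ^ 2 * (upWeight a b * (b + 2) ^ 2 + downWeight a b * b ^ 2) := by
  obtain ⟨t, ht, rfl⟩ : ∃ t, 0 ≤ t ∧ a = b + 2 + t := ⟨a - b - 2, by linarith, by ring⟩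
  have : 0 < 3 * (b + 2 + t) + (b + 2) - 4 := by linarith
  have : 0 < 3 * (b + 2 + t) + b - 4 := by linarith
  unfold upWeight downWeight
  field_simp
  rw [← sub_nonneg]
  ring_nf
  positivity

end Weights

theorem latticeP_of_neg {n ℓ : ℕ} {m : ℤ} (h : m < 0) : latticeP n ℓ m = 0 := by
  rw [latticeP, if_pos h]

theorem latticeP_of_le {n ℓ : ℕ} {m : ℤ} (h : 2 * n ≤ ℓ) :
    latticeP n ℓ m = if m = 0 then 1 else 0 := by
  rw [latticeP, dif_pos h]
  split_ifs <;> first | rfl | omega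

theorem latticeP_eq {n ℓ : ℕ} {m : ℤ} (hm : 0 ≤ m) (hℓ : ℓ < 2 * n) :
    latticeP n ℓ m = upWeight (ℓ : ℚ) m * latticeP n (ℓ + 1) (m + 1)
      + downWeight (ℓ : ℚ) m * latticeP n (ℓ + 1) (m - 1) := by
  rw [latticeP, if_neg hm.not_gt, dif_neg hℓ.not_ge, upWeight, downWeight]

theorem latticeP_nonneg {n ℓ : ℕ} {m : ℤ} (hm : m ≤ ℓ) : 0 ≤ latticeP n ℓ m := by
  rcases lt_or_ge m 0 with hm0 | hm0
  · rw [latticeP_of_neg hm0]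
  rcases le_or_gt (2 * n) ℓ with hℓ | hℓ
  · rw [latticeP_of_le hℓ]; split_ifs <;> norm_num
  have hup : 0 ≤ latticeP n (ℓ + 1) (m + 1) := latticeP_nonneg (by push_cast; omega)
  have hdown : 0 ≤ latticeP n (ℓ + 1) (m - 1) := latticeP_nonneg (by push_cast; omega)
  have hq : (0 : ℚ) ≤ m := by exact_mod_cast hm0
  rw [latticeP_eq hm0 hℓ]
  rcases hm0.eq_or_lt with rfl | hm1
  · rw [latticeP_of_neg (m := 0 - 1) (by norm_num), mul_zero, add_zero]
    exact mul_nonneg (upWeight_nonneg (by positivity) hq) hup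
  · have : (1 : ℚ) ≤ m := by exact_mod_cast hm1
    have : (m : ℚ) ≤ ℓ := by exact_mod_cast hm
    exact add_nonneg (mul_nonneg (upWeight_nonneg (by positivity) hq) hup)
      (mul_nonneg (downWeight_nonneg (by linarith)) hdown)
termination_by 2 * n - ℓ

theorem latticeP_add_two_mul_sq_le {n ℓ : ℕ} {m : ℤ} (hm : -1 ≤ m) (hmℓ : m + 2 ≤ ℓ) :
    latticeP n ℓ (m + 2) * ((m : ℚ) + 1) ^ 2 ≤ latticeP n ℓ m * ((m : ℚ) + 3) ^ 2 := by
  have hP : 0 ≤ latticeP n ℓ m := latticeP_nonneg (by omega)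
  obtain rfl | hm0 : m = -1 ∨ 0 ≤ m := by omega
  · norm_num [latticeP_of_neg]
  rcases le_or_gt (2 * n) ℓ with hℓ | hℓ
  · rw [latticeP_of_le hℓ, if_neg (by omega), zero_mul]
    positivity
  have ih_up := latticeP_add_two_mul_sq_le (n := n) (ℓ := ℓ + 1) (m := m + 1) (by omega)
    (by push_cast; omega)
  have ih_down := latticeP_add_two_mul_sq_le (n := n) (ℓ := ℓ + 1) (m := m - 1) (by omega)
    (by push_cast; omega)
  rw [show m + 1 + 2 = m + 3 by ring] at ih_up
  rw [show m - 1 + 2 = m + 1 by ring] at ih_down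
  push_cast at ih_up ih_down
  have hq : (0 : ℚ) ≤ m := by exact_mod_cast hm0
  have hqℓ : (m : ℚ) + 2 ≤ ℓ := by exact_mod_cast hmℓ
  have hup := upWeight_nonneg (a := (ℓ : ℚ)) (b := m + 2) (by positivity) (by positivity)
  have hdown := downWeight_nonneg (a := (ℓ : ℚ)) (b := m) (by linarith)
  have hP1 : 0 ≤ latticeP n (ℓ + 1) (m + 1) := latticeP_nonneg (by push_cast; omega)
  rw [latticeP_eq (by omega) hℓ, latticeP_eq hm0 hℓ, show m + 2 + 1 = m + 3 by ring,
    show m + 2 - 1 = m + 1 by ring]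
  push_cast
  refine le_of_mul_le_mul_right ?_ (by positivity : (0 : ℚ) < ((m : ℚ) + 2) ^ 2)
  linarith [mul_le_mul_of_nonneg_left ih_up (mul_nonneg hup (sq_nonneg ((m : ℚ) + 1))),
    mul_le_mul_of_nonneg_left ih_down (mul_nonneg hdown (sq_nonneg ((m : ℚ) + 3))),
    mul_le_mul_of_nonneg_right (sq_mul_weights_le hq hqℓ) hP1]
termination_by 2 * n - ℓ

theorem latticeP_add_two_div_sq_le {n ℓ j : ℕ} (h : j + 2 ≤ ℓ) :
    latticeP n ℓ (j + 2 : ℕ) / (((j + 2 : ℕ) : ℚ) + 1) ^ 2 ≤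
      latticeP n ℓ j / ((j : ℚ) + 1) ^ 2 := by
  have := latticeP_add_two_mul_sq_le (n := n) (ℓ := ℓ) (m := j) (by omega) (by omega)
  rw [div_le_div_iff₀ (by positivity) (by positivity)]
  push_cast at this ⊢
  linarith

theorem latticeP_add_two_mul_div_sq_le {n ℓ j : ℕ} :
    ∀ {i : ℕ}, j + 2 * i ≤ ℓ →
      latticeP n ℓ (j + 2 * i : ℕ) / (((j + 2 * i : ℕ) : ℚ) + 1) ^ 2 ≤
        latticeP n ℓ j / ((j : ℚ) + 1) ^ 2
  | 0, _ => le_rfl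
  | i + 1, h => by
    rw [show j + 2 * (i + 1) = j + 2 * i + 2 by ring]
    exact (latticeP_add_two_div_sq_le h).trans (latticeP_add_two_mul_div_sq_le (by omega))

theorem latticeP_ratio_monotone_general (n : ℕ) (j k ℓ : ℕ)
    (hjk : j < k) (hkl : k ≤ ℓ) (hpar : (k - j) % 2 = 0) :
    latticeP n ℓ (k : ℤ) / ((k : ℚ) + 1) ^ 2 ≤ latticeP n ℓ (j : ℤ) / ((j : ℚ) + 1) ^ 2 := by
  obtain ⟨i, rfl⟩ : ∃ i, k = j + 2 * i := ⟨(k - j) / 2, by omega⟩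
  exact latticeP_add_two_mul_div_sq_le hkl

theorem latticeP_ratio_monotone (n : ℕ) (hn : 1 ≤ n) (j k ℓ : ℕ)
    (hjk : j < k) (hkl : k ≤ ℓ) (hl : ℓ ≤ 2 * n) (hpar : (k - j) % 2 = 0) :
    latticeP n ℓ (k : ℤ) / ((k : ℚ) + 1) ^ 2 ≤ latticeP n ℓ (j : ℤ) / ((j : ℚ) + 1) ^ 2 :=
  latticeP_ratio_monotone_general n j k ℓ hjk hkl hpar
end

section
/- Define d(n,m) for n ≥ 2, m ≥ -1 by d(n,-1) = 0, d(2,0) = 1/3, d(2,m) = 0 for m ≥ 1, and d(n,m) = ((3n+m-4)/(3n+m-6)) * d(n-1,m+1) + ((3n+m-4)/(3n+3m)) * d(n-1,m-1) for n ≥ 3, m ≥ 0. Let b satisfy b(1,1) = 1, b(n,m) = 0 for n < m or m = 0, and b(n,m) = (2n+m-2) * ∑_{k=1}^{m} b(n-1,k) for n ≥ 2, 1 ≤ m ≤ n. Then for all n ≥ 2, b(n,n) = 3^n * n! * d(2n,0), and more generally d(p,q) = b((p+q)/2, (p-q)/2) / (3^{(p+q)/2} * ((p+q)/2)!) whenever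 p - q is even, p ≥ 4, 0 ≤ q ≤ p. -/
/-- The normalized double sequence `d(n,m)`: `d(n,-1) = 0`, `d(2,0) = 1/3`,
`d(2,m) = 0` for `m ≥ 1`, and for `n ≥ 3`, `m ≥ 0`,
`d(n,m) = ((3n+m-4)/(3n+m-6))·d(n-1,m+1) + ((3n+m-4)/(3n+3m))·d(n-1,m-1)`. -/
def dseq : ℕ → ℤ → ℚ
  | 0, _ => 0
  | 1, _ => 0
  | 2, m => if m = 0 then 1/3 else 0
  | (n+3), m =>
      if m < 0 then 0
      else ((3 * ((n : ℚ) + 3) + (m : ℚ) - 4) / (3 * ((n : ℚ) + 3) + (m : ℚ) - 6))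
             * dseq (n + 2) (m + 1)
        + ((3 * ((n : ℚ) + 3) + (m : ℚ) - 4) / (3 * ((n : ℚ) + 3) + 3 * (m : ℚ)))
             * dseq (n + 2) (m - 1)

/-
Put `N = (p+q)/2` and `M = (p-q)/2`. Subtracting consecutive instances of the defining
recurrence of `b` gives `b(N,M) / (2N+M-2) = b(N,M-1) / (2N+M-3) + b(N-1,M)`, and after
division by `3^N N!` this is exactly the recurrence of `d` at `(p,q) = (N+M, N-M)`. Both sides
vanish on the boundary (`M = 0`, where `d(N,N) = 0`, and `M > N`, where `N - M < 0`), so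
`d(N+M, N-M) = b(N,M) / (3^N N!)` holds for all `N, M` by induction on `N + M`.
-/

lemma bseq_eq_zero_of_lt {n m : ℕ} (h : n < m) : bseq n m = 0 := by
  match n with
  | 0 => rfl
  | 1 => simp [bseq, show m ≠ 1 by omega]
  | k + 2 => rw [bseq, if_pos (Or.inr h)]

lemma bseq_zero_right (n : ℕ) : bseq n 0 = 0 := by
  match n with
  | 0 => rfl
  | 1 => rfl
  | k + 2 => rw [bseq, if_pos (Or.inl rfl)]

lemma bseq_div_eq_sum (n m : ℕ) (hm : m ≤ n + 2) :
    bseq (n + 2) m / (2 * n + m + 2 : ℚ) = ∑ k ∈ Finset.Icc 1 m, bseq (n + 1) k := by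
  rcases Nat.eq_zero_or_pos m with rfl | hm0
  · simp [bseq_zero_right]
  · rw [bseq, if_neg (by omega), show 2 * (n + 2) + m - 2 = 2 * n + m + 2 by omega]
    push_cast
    field_simp

lemma bseq_succ_div (n m : ℕ) (hm : m ≤ n + 1) :
    bseq (n + 2) (m + 1) / (2 * n + m + 3 : ℚ)
      = bseq (n + 2) m / (2 * n + m + 2 : ℚ) + bseq (n + 1) (m + 1) := by
  have h := bseq_div_eq_sum n (m + 1) (by omega)
  rw [Finset.sum_Icc_succ_top (by omega), ← bseq_div_eq_sum n m (by omega)] at h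
  push_cast at h
  linear_combination h

lemma dseq_eq_zero_of_neg {n : ℕ} {m : ℤ} (h : m < 0) : dseq n m = 0 := by
  match n with
  | 0 => rfl
  | 1 => rfl
  | 2 => simp [dseq, show m ≠ 0 by omega]
  | k + 3 => rw [dseq, if_pos h]

lemma dseq_eq_zero_of_le : ∀ {n : ℕ} {m : ℤ}, (n : ℤ) ≤ m → dseq n m = 0
  | 0, _, _ => rfl
  | 1, _, _ => rfl
  | 2, m, h => by simp [dseq, show m ≠ 0 by omega]
  | k + 3, m, h => by
    rw [dseq, if_neg (by omega), dseq_eq_zero_of_le (by push_cast at h ⊢; omega),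
      dseq_eq_zero_of_le (by push_cast at h ⊢; omega)]
    ring

lemma dseq_add_sub_succ (n m : ℕ) (hm : m ≤ n + 1) :
    dseq (n + 2 + (m + 1)) ((n + 2 : ℕ) - (m + 1 : ℕ))
      = (2 * n + m + 3) / (2 * n + m + 2) * dseq (n + 2 + m) ((n + 2 : ℕ) - m)
        + (2 * n + m + 3) / (3 * (n + 2)) * dseq (n + 1 + (m + 1)) ((n + 1 : ℕ) - (m + 1 : ℕ)) := by
  rw [show n + 2 + (m + 1) = n + m + 3 by omega, dseq, if_neg (by omega)]
  congr 1 <;> congr 1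
  · push_cast
    rw [div_eq_div_iff (by ring_nf; positivity) (by positivity)]
    ring
  · congr 1 <;> omega
  · push_cast
    rw [div_eq_div_iff (by ring_nf; positivity) (by positivity)]
    ring
  · congr 1 <;> omega

lemma dseq_add_sub_eq_bseq_div (N M : ℕ) :
    dseq (N + M) ((N : ℤ) - M) = bseq N M / ((3 : ℚ) ^ N * (N.factorial : ℚ)) := by
  match N, M with
  | N, 0 => simp [dseq_eq_zero_of_le, bseq_zero_right]
  | 1, 1 => norm_num [dseq, bseq]
  | 0, m + 1 | 1, m + 2 =>
    rw [dseq_eq_zero_of_neg (by omega), bseq_eq_zero_of_lt (by omega), zero_div]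
  | n + 2, m + 1 =>
    rcases Nat.lt_or_ge (n + 1) m with hlt | hm
    · rw [dseq_eq_zero_of_neg (by omega), bseq_eq_zero_of_lt (by omega), zero_div]
    rw [dseq_add_sub_succ n m hm, dseq_add_sub_eq_bseq_div (n + 2) m,
      dseq_add_sub_eq_bseq_div (n + 1) (m + 1), eq_div_iff (by positivity),
      (div_eq_iff (by positivity)).mp (bseq_succ_div n m hm), Nat.factorial_succ (n + 1)]
    push_cast
    field_simp
    ring
termination_by N + M

theorem dseq_eq_normalized_bseq :
    (∀ n : ℕ, 2 ≤ n →
      bseq n n = (3 ^ n : ℚ) * (Nat.factorial n : ℚ) * dseq (2 * n) 0) ∧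
    (∀ p q : ℕ, 4 ≤ p → q ≤ p → (p - q) % 2 = 0 →
      dseq p (q : ℤ)
        = bseq ((p + q) / 2) ((p - q) / 2)
          / ((3 ^ ((p + q) / 2) : ℚ) * (Nat.factorial ((p + q) / 2) : ℚ))) := by
  refine ⟨fun n _ => ?_, fun p q _ hqp hpar => ?_⟩
  · have h := dseq_add_sub_eq_bseq_div n n
    rw [sub_self, ← two_mul] at h
    rw [h, mul_div_cancel₀ _ (by positivity)]
  · have h := dseq_add_sub_eq_bseq_div ((p + q) / 2) ((p - q) / 2)
    rwa [show (p + q) / 2 + (p - q) / 2 = p by omega,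
      show (((p + q) / 2 : ℕ) : ℤ) - ((p - q) / 2 : ℕ) = q by omega] at h
end

section
/- Let TC_hat(N) denote the number of tree-child networks with N non-root nodes, all N of which are bijectively labeled by {1,…,N}, and let TC(n,k) denote the number of tree-child networks with n labeled leaves and k reticulation nodes. Then for odd N, TC_hat(N) = ∑_{n=⌈(N+3)/4⌉}^{(N+1)/2} (N!/n!) * TC(n, (N+1)/2 - n). -/
/-- In-degree of a vertex in a digraph given by an adjacency relation. -/
noncomputable def indeg {V : Type} (adj : V → V → Prop) (v : V) : ℕ := Nat.card {u // adj u v}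

/-- Out-degree of a vertex in a digraph given by an adjacency relation. -/
noncomputable def outdeg {V : Type} (adj : V → V → Prop) (v : V) : ℕ := Nat.card {u // adj v u}

/-- A (rooted, binary) phylogenetic network: a connected rooted DAG whose root has
indegree 0 and outdegree 1, and whose non-root vertices are leaves (indegree 1,
outdegree 0), tree nodes (indegree 1, outdegree 2), or reticulation nodes
(indegree 2, outdegree 1). (Adjacency is a relation, so there are no parallel edges.) -/
structure IsPhyloNetwork {V : Type} [Finite V] (adj : V → V → Prop) (root : V) : Prop where
  acyclic : ∀ v, ¬ Relation.TransGen adj v v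
  connected : ∀ v, Relation.ReflTransGen adj root v
  root_indeg : indeg adj root = 0
  root_outdeg : outdeg adj root = 1
  node_types : ∀ v, v ≠ root →
    (indeg adj v = 1 ∧ outdeg adj v = 0) ∨
    (indeg adj v = 1 ∧ outdeg adj v = 2) ∨
    (indeg adj v = 2 ∧ outdeg adj v = 1)

/-- A leaf: indegree 1 and outdegree 0. -/
def IsLeaf {V : Type} (adj : V → V → Prop) (v : V) : Prop :=
  indeg adj v = 1 ∧ outdeg adj v = 0

/-- A tree node: indegree 1 and outdegree 2. -/
def IsTreeNode {V : Type} (adj : V → V → Prop) (v : V) : Prop :=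
  indeg adj v = 1 ∧ outdeg adj v = 2

/-- A reticulation node: indegree 2 and outdegree 1. -/
def IsReticulation {V : Type} (adj : V → V → Prop) (v : V) : Prop :=
  indeg adj v = 2 ∧ outdeg adj v = 1

/-- A tree-child network: a phylogenetic network in which every node which is not a
leaf has at least one child which is not a reticulation node. -/
def IsTreeChildNetwork {V : Type} [Finite V] (adj : V → V → Prop) (root : V) : Prop :=
  IsPhyloNetwork adj root ∧
    ∀ v, ¬ IsLeaf adj v → ∃ u, adj v u ∧ ¬ IsReticulation adj u

/-- Tree-child networks with `N` non-root nodes, all bijectively labeled: concretely,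
tree-child networks on the vertex set `Fin (N+1)` with root `0` (the non-root nodes
carry the labels `1,…,N`; since only the root is unlabeled and it is determined as the
unique indegree-0 node, isomorphism classes correspond exactly to such concrete networks). -/
def NodeLabeledTC (N : ℕ) : Type :=
  {adj : Fin (N + 1) → Fin (N + 1) → Prop // IsTreeChildNetwork adj 0}

/-- `TC_hat(N)`: the number of tree-child networks with `N` labeled non-root nodes. -/
noncomputable def TChat (N : ℕ) : ℕ := Nat.card (NodeLabeledTC N)

/-- Concrete representatives of tree-child networks with `n` labeled leaves and `k`
reticulation nodes: networks on the `2(n+k)` vertices `0,…,2(n+k)-1` with root `0`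
whose leaves are exactly the vertices `1,…,n` (carrying the leaf labels). -/
def LeafLabeledTCRep (n k : ℕ) : Type :=
  {adj : Fin (2 * (n + k)) → Fin (2 * (n + k)) → Prop //
    ∃ h : 0 < 2 * (n + k), IsTreeChildNetwork adj ⟨0, h⟩ ∧
      ∀ v : Fin (2 * (n + k)), IsLeaf adj v ↔ (1 ≤ v.val ∧ v.val ≤ n)}

/-- Two representatives are isomorphic as leaf-labeled networks if they differ by a
relabeling of the vertices fixing the root and the labeled leaves `1,…,n`. -/
def LeafLabeledIso (n k : ℕ) (A B : LeafLabeledTCRep n k) : Prop :=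
  ∃ σ : Equiv.Perm (Fin (2 * (n + k))),
    (∀ v : Fin (2 * (n + k)), v.val ≤ n → σ v = v) ∧
    ∀ u v, A.1 u v ↔ B.1 (σ u) (σ v)

/-- `TC(n,k)`: the number of tree-child networks with `n` labeled leaves and `k`
reticulation nodes, i.e. the number of representatives up to leaf-labeled isomorphism. -/
noncomputable def TCcount (n k : ℕ) : ℕ := Nat.card (Quot (LeafLabeledIso n k))


/-!
Split the node-labeled networks by their number `n` of leaves. A phylogenetic network with `n`
leaves and `k` reticulations has `2 (n + k)` vertices, and a tree-child network has `k < n`,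
so `n` runs over the stated interval and `k = (N + 1) / 2 - n`.

For fixed `n`, double count the pairs `(A, e)` of a leaf-labeled representative `A` and a
root-preserving bijection `e` from its vertices to `{0, …, N}`. Relabeling `A` along `e` hits
every node-labeled network `B` with `n` leaves exactly `n! (N - n)!` times: `e` must map
`1, …, n` onto the leaves of `B` and is otherwise free. On the other side there are `N!`
bijections `e`, and since a tree-child network has no nontrivial automorphism fixing its leaves,
every leaf-labeled class contains exactly `(N - n)!` representatives. Hence
`#B · n! (N - n)! = TC(n, k) (N - n)! N!`.
-/

open Function
open scoped Nat

section Counting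

variable {X Y : Type*}

lemma card_eq_sum_card_fiber [Finite X] (f : X → Y) (s : Finset Y) (hf : ∀ x, f x ∈ s) :
    Nat.card X = ∑ y ∈ s, Nat.card {x // f x = y} := by
  classical
  have := Fintype.ofFinite X
  simp only [Nat.card_eq_fintype_card, Fintype.card_subtype]
  exact Finset.card_eq_sum_card_fiberwise fun x _ => hf x

lemma card_eq_card_mul_of_card_fiber [Finite X] [Finite Y] (f : X → Y) {c : ℕ}
    (hf : ∀ y, Nat.card {x // f x = y} = c) : Nat.card X = Nat.card Y * c := by
  have := Fintype.ofFinite Y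
  rw [card_eq_sum_card_fiber f Finset.univ fun _ => Finset.mem_univ _]
  simp [hf]

lemma card_equiv_comp_eq [Finite X] [Finite Y] {ι : Type*} [Fintype ι] {f : X → ι}
    {g : Y → ι} (hfg : ∀ i, Nat.card {x // f x = i} = Nat.card {y // g y = i}) :
    Nat.card {e : X ≃ Y // g ∘ e = f} = ∏ i, (Nat.card {x // f x = i})! := by
  classical
  have := Fintype.ofFinite X
  obtain ⟨e₀, he₀⟩ : ∃ e₀ : X ≃ Y, g ∘ e₀ = f :=
    ⟨Equiv.ofFiberEquiv fun i => (Finite.card_eq.mp (hfg i)).some,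
      funext (Equiv.ofFiberEquiv_map _)⟩
  have hg : g = f ∘ e₀.symm := by rw [← he₀]; ext; simp
  rw [Nat.card_congr ((Equiv.equivCongr (.refl X) e₀.symm).subtypeEquiv
    (q := fun σ : Equiv.Perm X => f ∘ σ = f) fun e => by rw [hg]; rfl),
    Nat.card_eq_fintype_card, DomMulAct.stabilizer_card]
  simp [Nat.card_eq_fintype_card]

lemma comp_perm_eq_self_of_forall_ne {ι : Type*} {f : X → ι} {i : ι} {σ : Equiv.Perm X}
    (h : ∀ x, f x ≠ i → σ x = x) : f ∘ σ = f := by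
  funext x
  by_cases hx : f x = i
  · by_contra hne
    have hσx : σ (σ x) = σ x := h (σ x) (hx ▸ hne)
    exact hne (by simp [σ.injective hσx])
  · simp [h x hx]

end Counting

section RootClass

variable {V W : Type*} {r : V} {r' : W} {P : V → Prop} {Q : W → Prop} {v : V}

open Classical in
noncomputable def rootClass (r : V) (P : V → Prop) (v : V) : Fin 3 :=
  if v = r then 0 else if P v then 1 else 2

lemma rootClass_eq_zero_iff : rootClass r P v = 0 ↔ v = r := by
  unfold rootClass; split_ifs <;> simp_all

lemma rootClass_eq_one_iff (hr : ¬ P r) : rootClass r P v = 1 ↔ P v := by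
  unfold rootClass; split_ifs <;> simp_all

lemma rootClass_ne_two_iff : rootClass r P v ≠ 2 ↔ v = r ∨ P v := by
  unfold rootClass; split_ifs <;> simp_all

lemma rootClass_eq_rootClass_iff {P' : V → Prop} (hP : ¬ P r) (hP' : ¬ P' r) :
    rootClass r P = rootClass r P' ↔ ∀ v, P v ↔ P' v := by
  refine ⟨fun h v => ?_, fun h => ?_⟩
  · rw [← rootClass_eq_one_iff hP, ← rootClass_eq_one_iff hP', h]
  · obtain rfl : P = P' := funext fun v => propext (h v)
    rfl

lemma rootClass_comp_equiv {e : V ≃ W} (he : e r = r') (hPQ : ∀ v, Q (e v) ↔ P v) :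
    rootClass r' Q ∘ e = rootClass r P := by
  funext v
  have hv : e v = r' ↔ v = r := by rw [← he, e.injective.eq_iff]
  by_cases hvr : v = r <;> by_cases hPv : P v <;> simp [rootClass, hv, hvr, hPv, hPQ, he]

lemma eq_of_rootClass_comp_eq {e : V ≃ W} (he : rootClass r' Q ∘ e = rootClass r P) :
    e r = r' :=
  rootClass_eq_zero_iff.mp ((congrFun he r).trans (rootClass_eq_zero_iff.mpr rfl))

lemma card_rootClass_fiber [Finite V] (hr : ¬ P r) (i : Fin 3) :
    Nat.card {v // rootClass r P v = i} =
      ![1, Nat.card {v // P v}, Nat.card V - 1 - Nat.card {v // P v}] i := by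
  have h0 : Nat.card {v // rootClass r P v = 0} = 1 := by
    simp [rootClass_eq_zero_iff]
  have h1 : Nat.card {v // rootClass r P v = 1} = Nat.card {v // P v} := by
    simp [rootClass_eq_one_iff hr]
  have hsum := card_eq_sum_card_fiber (rootClass r P) Finset.univ fun _ => Finset.mem_univ _
  rw [Fin.sum_univ_three, h0, h1] at hsum
  fin_cases i
  · exact h0
  · exact h1
  · simp only [Fin.reduceFinMk, Matrix.cons_val]
    omega

lemma card_equiv_comp_rootClass [Finite V] [Finite W] (hr : ¬ P r) (hr' : ¬ Q r')
    (hPQ : Nat.card {v // P v} = Nat.card {w // Q w}) (hVW : Nat.card V = Nat.card W) :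
    Nat.card {e : V ≃ W // rootClass r' Q ∘ e = rootClass r P} =
      (Nat.card {v // P v})! * (Nat.card V - 1 - Nat.card {v // P v})! := by
  rw [card_equiv_comp_eq fun i => by
    rw [card_rootClass_fiber hr, card_rootClass_fiber hr', hPQ, hVW], Fin.prod_univ_three]
  simp [card_rootClass_fiber hr]

lemma card_equiv_apply_eq [Finite V] [Finite W] (r : V) (r' : W)
    (hVW : Nat.card V = Nat.card W) : Nat.card {e : V ≃ W // e r = r'} = (Nat.card V - 1)! := by
  have hiff (e : V ≃ W) :
      e r = r' ↔ rootClass r' (fun _ => False) ∘ e = rootClass r fun _ => False :=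
    ⟨fun he => rootClass_comp_equiv he fun _ => Iff.rfl, eq_of_rootClass_comp_eq⟩
  rw [Nat.card_congr (Equiv.subtypeEquivRight hiff),
    card_equiv_comp_rootClass (by simp) (by simp) (by simp) hVW]
  simp

lemma card_perm_fixing_rootClass_ne_two [Finite V] (hr : ¬ P r) :
    Nat.card {σ : Equiv.Perm V // ∀ v, rootClass r P v ≠ 2 → σ v = v} =
      (Nat.card V - 1 - Nat.card {v // P v})! := by
  classical
  rw [← Nat.card_congr (Equiv.Perm.subtypeEquivSubtypePerm _), Nat.card_perm,
    card_rootClass_fiber hr]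
  rfl

end RootClass

section RelIso

variable {V W : Type} {adj : V → V → Prop} {adj' : W → W → Prop}

lemma indeg_relIso (f : adj ≃r adj') (v : V) : indeg adj' (f v) = indeg adj v :=
  Nat.card_congr (f.toEquiv.subtypeEquiv (p := (adj · v)) fun _ => f.map_rel_iff.symm).symm

lemma outdeg_relIso (f : adj ≃r adj') (v : V) : outdeg adj' (f v) = outdeg adj v :=
  Nat.card_congr (f.toEquiv.subtypeEquiv (p := adj v) fun _ => f.map_rel_iff.symm).symm

lemma isLeaf_relIso_iff (f : adj ≃r adj') (v : V) : IsLeaf adj' (f v) ↔ IsLeaf adj v := by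
  simp only [IsLeaf, indeg_relIso, outdeg_relIso]

lemma isReticulation_relIso_iff (f : adj ≃r adj') (v : V) :
    IsReticulation adj' (f v) ↔ IsReticulation adj v := by
  simp only [IsReticulation, indeg_relIso, outdeg_relIso]

lemma card_isLeaf_relIso (f : adj ≃r adj') :
    Nat.card {w // IsLeaf adj' w} = Nat.card {v // IsLeaf adj v} :=
  (Nat.card_congr (f.toEquiv.subtypeEquiv fun v => (isLeaf_relIso_iff f v).symm)).symm

lemma rootClass_isLeaf_comp_relIso (f : adj ≃r adj') (r : V) :
    rootClass (f r) (IsLeaf adj') ∘ f = rootClass r (IsLeaf adj) :=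
  rootClass_comp_equiv (e := f.toEquiv) rfl (isLeaf_relIso_iff f)

lemma transGen_relIso_iff (f : adj ≃r adj') (u v : V) :
    Relation.TransGen adj' (f u) (f v) ↔ Relation.TransGen adj u v := by
  refine ⟨fun h => ?_, Relation.TransGen.lift f (fun _ _ => f.map_rel_iff.mpr) _ _⟩
  simpa [onFun] using Relation.TransGen.lift f.symm (fun _ _ => f.symm.map_rel_iff.mpr) _ _ h

lemma reflTransGen_relIso_iff (f : adj ≃r adj') (u v : V) :
    Relation.ReflTransGen adj' (f u) (f v) ↔ Relation.ReflTransGen adj u v := by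
  refine ⟨fun h => ?_, Relation.ReflTransGen.lift f (fun _ _ => f.map_rel_iff.mpr) _ _⟩
  simpa [onFun] using
    Relation.ReflTransGen.lift f.symm (fun _ _ => f.symm.map_rel_iff.mpr) _ _ h

lemma IsPhyloNetwork.map [Finite V] [Finite W] {r : V} (h : IsPhyloNetwork adj r)
    (f : adj ≃r adj') : IsPhyloNetwork adj' (f r) where
  acyclic w := by
    obtain ⟨v, rfl⟩ := f.surjective w
    rw [transGen_relIso_iff]
    exact h.acyclic v
  connected w := by
    obtain ⟨v, rfl⟩ := f.surjective w
    rw [reflTransGen_relIso_iff]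
    exact h.connected v
  root_indeg := by rw [indeg_relIso, h.root_indeg]
  root_outdeg := by rw [outdeg_relIso, h.root_outdeg]
  node_types w hw := by
    obtain ⟨v, rfl⟩ := f.surjective w
    simpa only [indeg_relIso, outdeg_relIso] using h.node_types v (by rintro rfl; exact hw rfl)

lemma IsTreeChildNetwork.map [Finite V] [Finite W] {r : V} (h : IsTreeChildNetwork adj r)
    (f : adj ≃r adj') : IsTreeChildNetwork adj' (f r) := by
  refine ⟨h.1.map f, fun w hw => ?_⟩
  obtain ⟨v, rfl⟩ := f.surjective w
  obtain ⟨u, hvu, hu⟩ := h.2 v (by rwa [← isLeaf_relIso_iff f])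
  exact ⟨f u, f.map_rel_iff.mpr hvu, by rwa [isReticulation_relIso_iff]⟩

end RelIso

section Degrees

variable {V : Type} [Fintype V] (adj : V → V → Prop)

open Classical in
lemma indeg_eq_sum (v : V) : indeg adj v = ∑ u, if adj u v then 1 else 0 := by
  rw [indeg, Nat.card_eq_fintype_card, Fintype.card_subtype, Finset.sum_boole, Nat.cast_id]

open Classical in
lemma outdeg_eq_sum (v : V) : outdeg adj v = ∑ u, if adj v u then 1 else 0 := by
  rw [outdeg, Nat.card_eq_fintype_card, Fintype.card_subtype, Finset.sum_boole, Nat.cast_id]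

lemma sum_outdeg_eq_sum_indeg : ∑ v, outdeg adj v = ∑ v, indeg adj v := by
  classical
  simp only [outdeg_eq_sum, indeg_eq_sum]
  exact Finset.sum_comm

end Degrees

namespace IsPhyloNetwork

variable {V : Type} [Finite V] {adj : V → V → Prop} {r : V}

lemma not_adj_root (h : IsPhyloNetwork adj r) (u : V) : ¬ adj u r := fun hu =>
  (Finite.card_pos_iff.mpr ⟨(⟨u, hu⟩ : {u // adj u r})⟩).ne' h.root_indeg

lemma not_isLeaf_root (h : IsPhyloNetwork adj r) : ¬ IsLeaf adj r := by
  simp [IsLeaf, h.root_indeg]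

lemma not_isReticulation_root (h : IsPhyloNetwork adj r) : ¬ IsReticulation adj r := by
  simp [IsReticulation, h.root_indeg]

lemma eq_of_adj_of_adj (h : IsPhyloNetwork adj r) {a b c : V} (ha : adj a c) (hb : adj b c)
    (hc : ¬ IsReticulation adj c) : a = b := by
  have hc1 : indeg adj c = 1 := by
    rcases h.node_types c (by rintro rfl; exact h.not_adj_root a ha) with hc' | hc' | hc'
    exacts [hc'.1, hc'.1, absurd hc' hc]
  have := (Nat.card_eq_one_iff_unique.mp hc1).1
  exact congrArg Subtype.val (Subsingleton.elim (⟨a, ha⟩ : {u // adj u c}) ⟨b, hb⟩)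

lemma wellFounded_flip (h : IsPhyloNetwork adj r) : WellFounded (flip adj) := by
  have : IsTrans V (flip (Relation.TransGen adj)) := ⟨fun _ _ _ h₁ h₂ => h₂.trans h₁⟩
  have : Std.Irrefl (flip (Relation.TransGen adj)) := ⟨h.acyclic⟩
  exact Subrelation.wf (r := flip (Relation.TransGen adj)) (fun hab => .single hab)
    (Finite.wellFounded_of_trans_of_irrefl _)

open Classical in
lemma indeg_add_one (h : IsPhyloNetwork adj r) (v : V) :
    indeg adj v + 1 = outdeg adj v +
      2 * ((if IsLeaf adj v then 1 else 0) + if IsReticulation adj v then 1 else 0) := by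
  by_cases hv : v = r
  · subst hv
    simp [h.root_indeg, h.root_outdeg, h.not_isLeaf_root, h.not_isReticulation_root]
  · rcases h.node_types v hv with ⟨hi, ho⟩ | ⟨hi, ho⟩ | ⟨hi, ho⟩ <;>
      simp [IsLeaf, IsReticulation, hi, ho]

lemma card_eq_two_mul (h : IsPhyloNetwork adj r) :
    Nat.card V = 2 * (Nat.card {v // IsLeaf adj v} + Nat.card {v // IsReticulation adj v}) := by
  classical
  have := Fintype.ofFinite V
  have hsum := Finset.sum_congr rfl fun v (_ : v ∈ Finset.univ) => h.indeg_add_one v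
  rw [Finset.sum_add_distrib, Finset.sum_add_distrib, ← Finset.mul_sum, Finset.sum_add_distrib,
    Finset.sum_boole, Finset.sum_boole, Nat.cast_id, Nat.cast_id, sum_outdeg_eq_sum_indeg,
    Finset.sum_const, Finset.card_univ, smul_eq_mul, mul_one] at hsum
  simp only [Nat.card_eq_fintype_card, Fintype.card_subtype]
  omega

end IsPhyloNetwork

namespace IsTreeChildNetwork

variable {V : Type} [Finite V] {adj : V → V → Prop} {r : V}

/-- Going up from the leaves: a fixed tree child pins down its unique parent. -/
lemma relIso_apply_eq_self (h : IsTreeChildNetwork adj r) (f : adj ≃r adj)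
    (hf : ∀ v, IsLeaf adj v → f v = v) (v : V) : f v = v := by
  induction v using h.1.wellFounded_flip.induction with
  | _ v ih =>
    by_cases hv : IsLeaf adj v
    · exact hf v hv
    obtain ⟨c, hvc, hc⟩ := h.2 v hv
    have hfc : adj (f v) c := by simpa [ih c hvc] using f.map_rel_iff.mpr hvc
    exact h.1.eq_of_adj_of_adj hfc hvc hc

lemma card_reticulation_lt_card_leaf (h : IsTreeChildNetwork adj r) :
    Nat.card {v // IsReticulation adj v} < Nat.card {v // IsLeaf adj v} := by
  classical
  have := Fintype.ofFinite V
  -- each non-leaf is the unique parent of a chosen tree child, and the root is nobody's child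
  have hchild (v : {v // ¬ IsLeaf adj v}) : ∃ c : {c // ¬ IsReticulation adj c}, adj v c :=
    let ⟨c, hvc, hc⟩ := h.2 v v.2
    ⟨⟨c, hc⟩, hvc⟩
  choose child hchild using hchild
  have hinj : Injective child := fun a b hab =>
    Subtype.ext (h.1.eq_of_adj_of_adj (hchild a) (hab ▸ hchild b) (child a).2)
  have hroot : ⟨r, h.1.not_isReticulation_root⟩ ∉ Set.range child := by
    rintro ⟨v, hv⟩
    have := hchild v
    rw [hv] at this
    exact h.1.not_adj_root v this
  have hlt := Fintype.card_lt_of_injective_of_notMem child hinj hroot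
  rw [Fintype.card_subtype_compl, Fintype.card_subtype_compl] at hlt
  have := Fintype.card_subtype_le (IsLeaf adj)
  simp only [Nat.card_eq_fintype_card]
  omega

end IsTreeChildNetwork

section Relabel

variable {V W : Type}

def relabel (e : V ≃ W) (adj : V → V → Prop) : W → W → Prop :=
  fun a b => adj (e.symm a) (e.symm b)

lemma relabel_eq_iff {e : V ≃ W} {adj : V → V → Prop} {adj' : W → W → Prop} :
    relabel e adj = adj' ↔ ∀ u v, adj u v ↔ adj' (e u) (e v) := by
  refine ⟨fun h u v => by simp [← h, relabel], fun h => funext₂ fun a b => propext ?_⟩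
  simpa [relabel] using h (e.symm a) (e.symm b)

def relabelRelIso {e : V ≃ W} {adj : V → V → Prop} {adj' : W → W → Prop}
    (h : relabel e adj = adj') : adj ≃r adj' :=
  ⟨e, (relabel_eq_iff.mp h _ _).symm⟩

@[simp]
lemma coe_relabelRelIso {e : V ≃ W} {adj : V → V → Prop} {adj' : W → W → Prop}
    (h : relabel e adj = adj') : ⇑(relabelRelIso h) = e :=
  rfl

lemma relabel_symm_relabel (e : V ≃ W) (adj : V → V → Prop) :
    relabel e.symm (relabel e adj) = adj := by
  simp [relabel_eq_iff, relabel]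

lemma IsTreeChildNetwork.eq_of_relabel_eq [Finite V] {adj : V → V → Prop} {r : V}
    (h : IsTreeChildNetwork adj r) {σ τ : V ≃ W} (hστ : relabel σ adj = relabel τ adj)
    (hleaf : ∀ v, IsLeaf adj v → σ v = τ v) : σ = τ := by
  have hiso : ∀ u v, adj u v ↔ adj ((σ.trans τ.symm) u) ((σ.trans τ.symm) v) := by
    simpa [relabel_eq_iff, relabel] using hστ
  have hfix := h.relIso_apply_eq_self ⟨σ.trans τ.symm, (hiso _ _).symm⟩
    fun v hv => by simp [hleaf v hv]
  ext v
  simpa [Equiv.symm_apply_eq] using hfix v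

lemma IsTreeChildNetwork.relabel_of_rootClass_comp_eq [Finite V] [Finite W]
    {adj : V → V → Prop} {r : V} {r' : W} {Q : W → Prop} (h : IsTreeChildNetwork adj r)
    {e : V ≃ W} (he : rootClass r' Q ∘ e = rootClass r (IsLeaf adj)) :
    IsTreeChildNetwork (relabel e adj) r' ∧
      rootClass r' (IsLeaf (relabel e adj)) = rootClass r' Q := by
  have hr : e r = r' := eq_of_rootClass_comp_eq he
  have htc := h.map (relabelRelIso (rfl : relabel e adj = _))
  have hcls := rootClass_isLeaf_comp_relIso (relabelRelIso (rfl : relabel e adj = _)) r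
  rw [coe_relabelRelIso, hr, ← he] at hcls
  rw [coe_relabelRelIso, hr] at htc
  exact ⟨htc, e.surjective.injective_comp_right hcls⟩

end Relabel
section LeafLabeled

variable {n k : ℕ}

instance : Finite (LeafLabeledTCRep n k) := Subtype.finite

noncomputable def standardClass (n : ℕ) {m : ℕ} (h : 0 < m) : Fin m → Fin 3 :=
  rootClass ⟨0, h⟩ fun v => 1 ≤ v.val ∧ v.val ≤ n

lemma card_fin_one_le_val_le {m : ℕ} (h : n < m) :
    Nat.card {v : Fin m // 1 ≤ v.val ∧ v.val ≤ n} = n := by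
  have e : {v : Fin m // 1 ≤ v.val ∧ v.val ≤ n} ≃ Set.Icc 1 n :=
    { toFun v := ⟨v.1, v.2⟩
      invFun i := ⟨⟨i.1, by have := i.2.2; omega⟩, i.2⟩
      left_inv _ := rfl
      right_inv _ := rfl }
  rw [Nat.card_congr e]
  simp

lemma leafLabeledTCRep_iff (h : 0 < 2 * (n + k))
    (adj : Fin (2 * (n + k)) → Fin (2 * (n + k)) → Prop) :
    (∃ h' : 0 < 2 * (n + k), IsTreeChildNetwork adj ⟨0, h'⟩ ∧
      ∀ v : Fin (2 * (n + k)), IsLeaf adj v ↔ (1 ≤ v.val ∧ v.val ≤ n)) ↔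
    IsTreeChildNetwork adj ⟨0, h⟩ ∧
      rootClass ⟨0, h⟩ (IsLeaf adj) = standardClass n h := by
  refine ⟨fun ⟨_, htc, hleaf⟩ => ⟨htc, ?_⟩, fun ⟨htc, hcls⟩ => ⟨h, htc, ?_⟩⟩
  · exact (rootClass_eq_rootClass_iff htc.1.not_isLeaf_root (by simp)).mpr hleaf
  · exact (rootClass_eq_rootClass_iff htc.1.not_isLeaf_root (by simp)).mp hcls

lemma LeafLabeledIso.equivalence : Equivalence (LeafLabeledIso n k) where
  refl _ := ⟨1, fun _ _ => rfl, fun _ _ => Iff.rfl⟩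
  symm := fun ⟨σ, hσ, hAB⟩ =>
    ⟨σ.symm, fun v hv => σ.symm_apply_eq.mpr (hσ v hv).symm, fun u v => by simp [hAB]⟩
  trans := fun ⟨σ, hσ, hAB⟩ ⟨τ, hτ, hBC⟩ =>
    ⟨σ.trans τ, fun v hv => by simp [hσ v hv, hτ v hv],
      fun u v => (hAB u v).trans (hBC _ _)⟩

/-- By rigidity, the relabelings fixing the root and the leaves act freely on each class. -/
lemma card_leafLabeledIso_class (A : LeafLabeledTCRep n k) :
    Nat.card {B // LeafLabeledIso n k A B} = (2 * (n + k) - 1 - n)! := by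
  obtain ⟨h, -, hleaf⟩ := A.2
  obtain ⟨htc, hcls⟩ := (leafLabeledTCRep_iff h A.1).mp A.2
  have hfix (σ : Equiv.Perm (Fin (2 * (n + k)))) :
      (∀ v : Fin (2 * (n + k)), v.val ≤ n → σ v = v) ↔
        ∀ v, standardClass n h v ≠ 2 → σ v = v := by
    simp only [standardClass, rootClass_ne_two_iff, Fin.ext_iff]
    exact forall_congr' fun v => imp_congr_left (by omega)
  let S := {σ : Equiv.Perm (Fin (2 * (n + k))) // ∀ v, v.val ≤ n → σ v = v}
  have hrep (σ : S) : IsTreeChildNetwork (relabel σ.1 A.1) ⟨0, h⟩ ∧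
      rootClass ⟨0, h⟩ (IsLeaf (relabel σ.1 A.1)) = standardClass n h :=
    htc.relabel_of_rootClass_comp_eq ((comp_perm_eq_self_of_forall_ne ((hfix σ).mp σ.2)).trans
      hcls.symm)
  let cls (σ : S) : {B // LeafLabeledIso n k A B} :=
    ⟨⟨relabel σ.1 A.1, (leafLabeledTCRep_iff h _).mpr (hrep σ)⟩, σ, σ.2,
      fun u v => by simp [relabel]⟩
  have hbij : Bijective cls := by
    refine ⟨fun σ τ hστ => Subtype.ext (htc.eq_of_relabel_eq ?_ fun v hv => ?_), ?_⟩
    · exact congrArg (fun B => B.1.1) hστ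
    · rw [σ.2 v ((hleaf v).mp hv).2, τ.2 v ((hleaf v).mp hv).2]
    · rintro ⟨B, σ, hσ, hAB⟩
      exact ⟨⟨σ, hσ⟩, Subtype.ext (Subtype.ext (relabel_eq_iff.mpr hAB))⟩
  rw [← Nat.card_congr (Equiv.ofBijective cls hbij),
    Nat.card_congr (Equiv.subtypeEquivRight hfix), standardClass,
    card_perm_fixing_rootClass_ne_two (by simp), card_fin_one_le_val_le (by omega)]
  simp

lemma card_leafLabeledTCRep :
    Nat.card (LeafLabeledTCRep n k) = TCcount n k * (2 * (n + k) - 1 - n)! := by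
  refine card_eq_card_mul_of_card_fiber (Quot.mk _) fun q => ?_
  obtain ⟨A, rfl⟩ := Quot.exists_rep q
  rw [← card_leafLabeledIso_class A]
  exact Nat.card_congr (Equiv.subtypeEquivRight fun B =>
    (LeafLabeledIso.equivalence.quot_mk_eq_iff B A).trans ⟨LeafLabeledIso.equivalence.symm,
      LeafLabeledIso.equivalence.symm⟩)

end LeafLabeled

section NodeLabeled

variable {n k N : ℕ}

instance : Finite (NodeLabeledTC N) := Subtype.finite

noncomputable def relabelRep (h : 0 < 2 * (n + k))
    (x : LeafLabeledTCRep n k × {e : Fin (2 * (n + k)) ≃ Fin (N + 1) // e ⟨0, h⟩ = 0}) :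
    {B : NodeLabeledTC N // Nat.card {v // IsLeaf B.1 v} = n} :=
  ⟨⟨relabel x.2.1 x.1.1, by
      have := ((leafLabeledTCRep_iff h _).mp x.1.2).1.map
        (relabelRelIso (rfl : relabel x.2.1 x.1.1 = _))
      rwa [coe_relabelRelIso, x.2.2] at this⟩, by
    obtain ⟨-, -, hleaf⟩ := x.1.2
    rw [card_isLeaf_relIso (relabelRelIso (rfl : relabel x.2.1 x.1.1 = _)),
      Nat.card_congr (Equiv.subtypeEquivRight hleaf), card_fin_one_le_val_le (by omega)]⟩

lemma card_relabelRep_fiber (h : 0 < 2 * (n + k)) (hN : N + 1 = 2 * (n + k))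
    (B : {B : NodeLabeledTC N // Nat.card {v // IsLeaf B.1 v} = n}) :
    Nat.card {x // relabelRep h x = B} = n ! * (N - n)! := by
  have hrel (x) : relabelRep h x = B ↔ relabel x.2.1 x.1.1 = B.1.1 :=
    ⟨fun hx => congrArg (fun B => B.1.1) hx, fun hx => Subtype.ext (Subtype.ext hx)⟩
  have hrep (e : {e : Fin (2 * (n + k)) ≃ Fin (N + 1) //
      rootClass 0 (IsLeaf B.1.1) ∘ e = standardClass n h}) :
      IsTreeChildNetwork (relabel e.1.symm B.1.1) ⟨0, h⟩ ∧
        rootClass ⟨0, h⟩ (IsLeaf (relabel e.1.symm B.1.1)) = standardClass n h :=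
    B.1.2.relabel_of_rootClass_comp_eq (funext fun w =>
      (congrFun e.2 (e.1.symm w)).symm.trans (congrArg _ (e.1.apply_symm_apply w)))
  let toColouring : {x // relabelRep h x = B} ≃ {e : Fin (2 * (n + k)) ≃ Fin (N + 1) //
      rootClass 0 (IsLeaf B.1.1) ∘ e = standardClass n h} :=
    { toFun x := ⟨x.1.2.1, by
        have hcls := rootClass_isLeaf_comp_relIso (relabelRelIso ((hrel x.1).mp x.2)) ⟨0, h⟩
        rwa [coe_relabelRelIso, x.1.2.2, ((leafLabeledTCRep_iff h _).mp x.1.1.2).2] at hcls⟩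
      invFun e := ⟨(⟨relabel e.1.symm B.1.1, (leafLabeledTCRep_iff h _).mpr (hrep e)⟩,
          ⟨e.1, eq_of_rootClass_comp_eq e.2⟩),
        (hrel _).mpr (by simpa using relabel_symm_relabel e.1.symm B.1.1)⟩
      left_inv x := by
        refine Subtype.ext (Prod.ext (Subtype.ext ?_) rfl)
        simp only [← (hrel x.1).mp x.2, relabel_symm_relabel]
      right_inv _ := rfl }
  rw [Nat.card_congr toColouring, standardClass, card_equiv_comp_rootClass (by simp)
    B.1.2.1.not_isLeaf_root (by rw [card_fin_one_le_val_le (by omega), B.2]) (by simp [hN]),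
    card_fin_one_le_val_le (by omega), Nat.card_fin]
  congr 2
  omega

lemma card_nodeLabeledTC_leaves (hN : N + 1 = 2 * (n + k)) :
    Nat.card {B : NodeLabeledTC N // Nat.card {v // IsLeaf B.1 v} = n} =
      N ! / n ! * TCcount n k := by
  have h : 0 < 2 * (n + k) := by omega
  have hcount := card_eq_card_mul_of_card_fiber (relabelRep h) (card_relabelRep_fiber h hN)
  rw [Nat.card_prod, card_leafLabeledTCRep, card_equiv_apply_eq _ _ (by simp [hN]),
    Nat.card_fin, show 2 * (n + k) - 1 - n = N - n by omega,
    show 2 * (n + k) - 1 = N by omega] at hcount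
  rw [Nat.div_mul_right_comm (Nat.factorial_dvd_factorial (by omega))]
  refine Nat.eq_div_of_mul_eq_left (Nat.factorial_ne_zero n)
    (Nat.eq_of_mul_eq_mul_right (Nat.factorial_pos (N - n)) ?_)
  rw [mul_assoc, ← hcount]
  ring

end NodeLabeled

lemma card_isLeaf_mem_Icc {N : ℕ} (A : NodeLabeledTC N) :
    Nat.card {v // IsLeaf A.1 v} ∈ Finset.Icc ((N + 6) / 4) ((N + 1) / 2) := by
  have hcard := A.2.1.card_eq_two_mul
  have hlt := A.2.card_reticulation_lt_card_leaf
  rw [Nat.card_fin] at hcard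
  rw [Finset.mem_Icc]
  omega

theorem TChat_eq_sum_TCcount (N : ℕ) (hN : N % 2 = 1) :
    TChat N = ∑ n ∈ Finset.Icc ((N + 6) / 4) ((N + 1) / 2),
      (Nat.factorial N / Nat.factorial n) * TCcount n ((N + 1) / 2 - n) := by
  rw [TChat, card_eq_sum_card_fiber _ _ card_isLeaf_mem_Icc]
  refine Finset.sum_congr rfl fun n hn => card_nodeLabeledTC_leaves ?_
  rw [Finset.mem_Icc] at hn
  omega
end

section
/- Every tree-child network with n leaves and k reticulation nodes has exactly n - k - 1 free tree nodes, where a tree node is free if each of its children is either a tree node or a leaf. -/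
/-- A free tree node: a tree node each of whose children is either a tree node or a leaf. -/
def IsFreeTreeNode {V : Type} (adj : V → V → Prop) (v : V) : Prop :=
  IsTreeNode adj v ∧ ∀ u, adj v u → IsTreeNode adj u ∨ IsLeaf adj u

section Aux

variable {V : Type} [Finite V] {adj : V → V → Prop}

lemma outdeg_pos {p u : V} (h : adj p u) : 0 < outdeg adj p := by
  have : Nonempty {x // adj p x} := ⟨⟨u, h⟩⟩
  exact Nat.card_pos

lemma indeg_pos {p u : V} (h : adj p u) : 0 < indeg adj u := by
  have : Nonempty {x // adj x u} := ⟨⟨p, h⟩⟩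
  exact Nat.card_pos

lemma child_unique {p r u : V} (h1 : outdeg adj p = 1) (hr : adj p r) (hu : adj p u) :
    u = r := by
  have hs := ((Nat.card_eq_one_iff_unique (α := {x // adj p x})).mp h1).1
  have : (⟨u, hu⟩ : {x // adj p x}) = ⟨r, hr⟩ := Subsingleton.elim _ _
  exact congrArg Subtype.val this

end Aux

theorem treeChild_free_node_count {V : Type} [Finite V] (adj : V → V → Prop) (root : V)
    (h : IsTreeChildNetwork adj root) (n k : ℕ)
    (hn : Nat.card {v : V // IsLeaf adj v} = n)
    (hk : Nat.card {v : V // IsReticulation adj v} = k) :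
    Nat.card {v : V // IsFreeTreeNode adj v} = n - k - 1 := by
  classical
  obtain ⟨hp, htc⟩ := h
  letI := Fintype.ofFinite V
  -- degrees as filter cardinalities
  have hind : ∀ v, indeg adj v = (Finset.univ.filter (fun u => adj u v)).card := by
    intro v; rw [indeg, Nat.card_eq_fintype_card, Fintype.card_subtype]
  have houtd : ∀ v, outdeg adj v = (Finset.univ.filter (fun u => adj v u)).card := by
    intro v; rw [outdeg, Nat.card_eq_fintype_card, Fintype.card_subtype]
  -- handshake lemma
  have hsum : ∑ v, indeg adj v = ∑ v, outdeg adj v := by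
    simp only [hind, houtd, Finset.card_filter]
    exact Finset.sum_comm
  -- children are not the root
  have child_ne_root : ∀ v u, adj v u → u ≠ root := by
    intro v u hvu heq
    have hpos := indeg_pos hvu
    rw [heq, hp.root_indeg] at hpos
    omega
  -- classification of children
  have child_cases : ∀ v u, adj v u →
      IsLeaf adj u ∨ IsTreeNode adj u ∨ IsReticulation adj u := by
    intro v u hvu
    exact hp.node_types u (child_ne_root v u hvu)
  -- a parent of a reticulation node is a non-free tree node
  have parent_tree : ∀ p r, adj p r → IsReticulation adj r →
      IsTreeNode adj p ∧ ¬ IsFreeTreeNode adj p := by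
    intro p r hpr hr
    have hpo : 0 < outdeg adj p := outdeg_pos hpr
    have hpleaf : ¬ IsLeaf adj p := by
      intro hl; rw [hl.2] at hpo; omega
    obtain ⟨u, hu, hur⟩ := htc p hpleaf
    have hune : u ≠ r := by intro e; exact hur (e ▸ hr)
    have hout_ne1 : outdeg adj p ≠ 1 := fun h1 => hune (child_unique h1 hpr hu)
    have hpnroot : p ≠ root := by
      intro e; rw [e, hp.root_outdeg] at hout_ne1; exact hout_ne1 rfl
    have hptree : IsTreeNode adj p := by
      rcases hp.node_types p hpnroot with hc | hc | hc
      · rw [hc.2] at hpo; omega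
      · exact hc
      · exact absurd hc.2 hout_ne1
    refine ⟨hptree, ?_⟩
    intro hf
    rcases hf.2 r hpr with ht | hl
    · have := hr.1; rw [ht.1] at this; omega
    · have := hr.2; rw [hl.2] at this; omega
  -- a tree node has at most one reticulation child
  have ret_child_unique : ∀ v, IsTreeNode adj v → ∀ r1 r2, adj v r1 →
      IsReticulation adj r1 → adj v r2 → IsReticulation adj r2 → r1 = r2 := by
    intro v hv r1 r2 h1 hr1 h2 hr2
    by_contra hne
    have hvleaf : ¬ IsLeaf adj v := by
      intro hl; have := hv.2; rw [hl.2] at this; omega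
    obtain ⟨u, hu, hur⟩ := htc v hvleaf
    have h3 : r1 ≠ u := by intro e; exact hur (e ▸ hr1)
    have h4 : r2 ≠ u := by intro e; exact hur (e ▸ hr2)
    have hcard3 : ({r1, r2, u} : Finset V).card = 3 :=
      Finset.card_eq_three.mpr ⟨r1, r2, u, hne, h3, h4, rfl⟩
    have hsub : ({r1, r2, u} : Finset V) ⊆ Finset.univ.filter (fun x => adj v x) := by
      intro x hx
      simp only [Finset.mem_insert, Finset.mem_singleton] at hx
      simp only [Finset.mem_filter, Finset.mem_univ, true_and]
      rcases hx with e | e | e <;> subst e <;> assumption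
    have hle := Finset.card_le_card hsub
    rw [← houtd v, hv.2, hcard3] at hle
    omega
  -- non-freeness of a tree node means having a reticulation child
  have nf_iff : ∀ v, IsTreeNode adj v →
      (¬ IsFreeTreeNode adj v ↔ ∃ r, adj v r ∧ IsReticulation adj r) := by
    intro v hv
    constructor
    · intro hnf
      by_contra hno
      push_neg at hno
      apply hnf
      refine ⟨hv, ?_⟩
      intro u hu
      rcases child_cases v u hu with hl | ht | hr
      · exact Or.inr hl
      · exact Or.inl ht
      · exact absurd hr (hno u hu)
    · rintro ⟨r, hr, hret⟩ hf
      rcases hf.2 r hr with ht | hl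
      · have := hret.1; rw [ht.1] at this; omega
      · have := hret.2; rw [hl.2] at this; omega
  -- the four classes of vertices
  set L : Finset V := Finset.univ.filter (fun v => IsLeaf adj v) with hL
  set T : Finset V := Finset.univ.filter (fun v => IsTreeNode adj v) with hT
  set R : Finset V := Finset.univ.filter (fun v => IsReticulation adj v) with hR
  set F : Finset V := Finset.univ.filter (fun v => IsFreeTreeNode adj v) with hF
  have hn' : L.card = n := by
    rw [← hn, Nat.card_eq_fintype_card, Fintype.card_subtype]
  have hk' : R.card = k := by
    rw [← hk, Nat.card_eq_fintype_card, Fintype.card_subtype]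
  have hgoal : Nat.card {v : V // IsFreeTreeNode adj v} = F.card := by
    rw [Nat.card_eq_fintype_card, Fintype.card_subtype]
  rw [hgoal, ← hn', ← hk']
  -- the partition of the vertex set
  have hrootL : root ∉ L := by
    simp only [hL, Finset.mem_filter, Finset.mem_univ, true_and]
    intro hc; have := hc.1; rw [hp.root_indeg] at this; omega
  have hrootT : root ∉ T := by
    simp only [hT, Finset.mem_filter, Finset.mem_univ, true_and]
    intro hc; have := hc.1; rw [hp.root_indeg] at this; omega
  have hrootR : root ∉ R := by
    simp only [hR, Finset.mem_filter, Finset.mem_univ, true_and]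
    intro hc; have := hc.1; rw [hp.root_indeg] at this; omega
  have hdLT : Disjoint L T := by
    rw [Finset.disjoint_left]
    intro a ha hb
    simp only [hL, hT, Finset.mem_filter, Finset.mem_univ, true_and] at ha hb
    have := ha.2; have := hb.2; omega
  have hdLR : Disjoint L R := by
    rw [Finset.disjoint_left]
    intro a ha hb
    simp only [hL, hR, Finset.mem_filter, Finset.mem_univ, true_and] at ha hb
    have := ha.1; have := hb.1; omega
  have hdTR : Disjoint T R := by
    rw [Finset.disjoint_left]
    intro a ha hb
    simp only [hT, hR, Finset.mem_filter, Finset.mem_univ, true_and] at ha hb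
    have := ha.1; have := hb.1; omega
  have hdLTR : Disjoint (L ∪ T) R := Finset.disjoint_union_left.mpr ⟨hdLR, hdTR⟩
  have hrootU : root ∉ L ∪ T ∪ R := by
    simp only [Finset.mem_union]
    push_neg
    exact ⟨⟨hrootL, hrootT⟩, hrootR⟩
  have huniv : (Finset.univ : Finset V) = insert root (L ∪ T ∪ R) := by
    apply Finset.ext
    intro v
    simp only [Finset.mem_univ, true_iff, Finset.mem_insert, Finset.mem_union,
      hL, hT, hR, Finset.mem_filter, Finset.mem_univ, true_and]
    rcases eq_or_ne v root with e | e
    · exact Or.inl e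
    · rcases hp.node_types v e with hc | hc | hc
      · exact Or.inr (Or.inl (Or.inl hc))
      · exact Or.inr (Or.inl (Or.inr hc))
      · exact Or.inr (Or.inr hc)
  have hsplit : ∀ g : V → ℕ, ∑ v, g v
      = g root + ((∑ v ∈ L, g v + ∑ v ∈ T, g v) + ∑ v ∈ R, g v) := by
    intro g
    rw [huniv, Finset.sum_insert hrootU, Finset.sum_union hdLTR, Finset.sum_union hdLT]
  -- compute the two sides of the handshake identity
  have hLin : ∑ v ∈ L, indeg adj v = L.card := by
    rw [Finset.sum_congr rfl (fun v hv => ?_), Finset.sum_const, smul_eq_mul, mul_one]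
    simp only [hL, Finset.mem_filter] at hv
    exact hv.2.1
  have hTin : ∑ v ∈ T, indeg adj v = T.card := by
    rw [Finset.sum_congr rfl (fun v hv => ?_), Finset.sum_const, smul_eq_mul, mul_one]
    simp only [hT, Finset.mem_filter] at hv
    exact hv.2.1
  have hRin : ∑ v ∈ R, indeg adj v = 2 * R.card := by
    rw [Finset.sum_congr rfl (fun v hv => ?_), Finset.sum_const, smul_eq_mul, mul_comm]
    simp only [hR, Finset.mem_filter] at hv
    exact hv.2.1
  have hLout : ∑ v ∈ L, outdeg adj v = 0 := by
    rw [Finset.sum_congr rfl (fun v hv => ?_), Finset.sum_const, smul_eq_mul, mul_zero]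
    simp only [hL, Finset.mem_filter] at hv
    exact hv.2.2
  have hTout : ∑ v ∈ T, outdeg adj v = 2 * T.card := by
    rw [Finset.sum_congr rfl (fun v hv => ?_), Finset.sum_const, smul_eq_mul, mul_comm]
    simp only [hT, Finset.mem_filter] at hv
    exact hv.2.2
  have hRout : ∑ v ∈ R, outdeg adj v = R.card := by
    rw [Finset.sum_congr rfl (fun v hv => ?_), Finset.sum_const, smul_eq_mul, mul_one]
    simp only [hR, Finset.mem_filter] at hv
    exact hv.2.2
  have key : L.card + T.card + 2 * R.card = 1 + 2 * T.card + R.card := by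
    have e1 := hsplit (indeg adj)
    have e2 := hsplit (outdeg adj)
    rw [hLin, hTin, hRin, hp.root_indeg] at e1
    rw [hLout, hTout, hRout, hp.root_outdeg] at e2
    omega
  -- count the non-free tree nodes: they are exactly twice as many as reticulations
  set P : Finset (V × V) :=
    Finset.univ.filter (fun p : V × V => adj p.1 p.2 ∧ IsReticulation adj p.2) with hP
  have hPcard : P.card = 2 * R.card := by
    have hfib : ∀ p ∈ P, p.2 ∈ R := by
      intro p hp'
      simp only [hP, Finset.mem_filter, Finset.mem_univ, true_and] at hp'
      simp only [hR, Finset.mem_filter, Finset.mem_univ, true_and]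
      exact hp'.2
    rw [Finset.card_eq_sum_card_fiberwise hfib]
    have hfibcard : ∀ r ∈ R, (P.filter (fun p => p.2 = r)).card = 2 := by
      intro r hr
      simp only [hR, Finset.mem_filter, Finset.mem_univ, true_and] at hr
      have : (P.filter (fun p => p.2 = r)).card
          = (Finset.univ.filter (fun u => adj u r)).card := by
        apply Finset.card_bij (fun p _ => p.1)
        · intro p hp'
          simp only [hP, Finset.mem_filter, Finset.mem_univ, true_and] at hp'
          simp only [Finset.mem_filter, Finset.mem_univ, true_and]
          rw [← hp'.2]
          exact hp'.1.1
        · intro p hp1 q hq1 he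
          simp only [hP, Finset.mem_filter, Finset.mem_univ, true_and] at hp1 hq1
          exact Prod.ext he (hp1.2.trans hq1.2.symm)
        · intro u hu
          simp only [Finset.mem_filter, Finset.mem_univ, true_and] at hu
          refine ⟨(u, r), ?_, rfl⟩
          simp only [hP, Finset.mem_filter, Finset.mem_univ, true_and]
          exact ⟨⟨hu, hr⟩, trivial⟩
      rw [this, ← hind r, hr.1]
    rw [Finset.sum_congr rfl hfibcard, Finset.sum_const, smul_eq_mul, mul_comm]
  have hNF : (T.filter (fun v => ¬ IsFreeTreeNode adj v)).card = P.card := by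
    symm
    apply Finset.card_bij (fun (p : V × V) _ => p.1)
    · intro p hp'
      simp only [hP, Finset.mem_filter, Finset.mem_univ, true_and] at hp'
      have := parent_tree p.1 p.2 hp'.1 hp'.2
      simp only [hT, Finset.mem_filter, Finset.mem_univ, true_and]
      exact this
    · intro p hp1 q hq1 he
      simp only [hP, Finset.mem_filter, Finset.mem_univ, true_and] at hp1 hq1
      have htree := (parent_tree p.1 p.2 hp1.1 hp1.2).1
      have : p.2 = q.2 := by
        apply ret_child_unique p.1 htree p.2 q.2 hp1.1 hp1.2 (he ▸ hq1.1) hq1.2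
      exact Prod.ext he this
    · intro v hv
      simp only [hT, Finset.mem_filter, Finset.mem_univ, true_and] at hv
      obtain ⟨r, hr, hret⟩ := (nf_iff v hv.1).mp hv.2
      refine ⟨(v, r), ?_, rfl⟩
      simp only [hP, Finset.mem_filter, Finset.mem_univ, true_and]
      exact ⟨hr, hret⟩
  have hTF : T.filter (fun v => IsFreeTreeNode adj v) = F := by
    apply Finset.ext
    intro v
    simp only [hT, hF, Finset.mem_filter, Finset.mem_univ, true_and]
    exact ⟨fun hv => hv.2, fun hv => ⟨hv.1, hv⟩⟩
  have hTsplit : F.card + (T.filter (fun v => ¬ IsFreeTreeNode adj v)).card = T.card := by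
    rw [← hTF]
    exact Finset.card_filter_add_card_filter_not _
  rw [hNF, hPcard] at hTsplit
  omega
end

section
/- A tree-child network with n leaves has n - 1 reticulation nodes (the maximum possible) if and only if for every node v of the network there is a unique directed path from v to a leaf all of whose intermediate nodes are tree nodes. -/
/-- `l` is a directed path starting at `v` and ending at a leaf, all of whose
intermediate nodes are tree nodes. -/
def IsTreePathToLeaf {V : Type} (adj : V → V → Prop) (v : V) (l : List V) : Prop :=
  l.head? = some v ∧ (∃ w, l.getLast? = some w ∧ IsLeaf adj w) ∧
    List.Chain' adj l ∧ ∀ u ∈ (l.drop 1).dropLast, IsTreeNode adj u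


/-!
Every tree node and every leaf has a unique parent, and in a tree-child network every non-leaf
node has a non-reticulation child, so the parent map from the `t` tree nodes and `n` leaves onto
the non-leaf nodes (the root, the `t` tree nodes and the `r` reticulations) is surjective. It is a
bijection iff `t + n = 1 + t + r`, i.e. `r = n - 1`, iff no node has two non-reticulation
children. By well-founded induction along the acyclic edge relation, the latter holds iff tree
paths to leaves are unique: such a path is determined by the non-reticulation child it enters
first.
-/

lemma Nat.card_subtype_or_of_disjoint {α : Type*} [Finite α] {p q : α → Prop}
    (h : ∀ a, p a → ¬ q a) :
    Nat.card {a // p a ∨ q a} = Nat.card {a // p a} + Nat.card {a // q a} := by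
  classical
  rw [Nat.card_congr (subtypeOrEquiv p q fun r hp hq a hr => h a (hp a hr) (hq a hr)),
    Nat.card_sum]

section Degrees

variable {V : Type} {adj : V → V → Prop} {u v w : V}

lemma indeg_ne_zero_of_adj [Finite V] (h : adj u v) : indeg adj v ≠ 0 :=
  Nat.card_ne_zero.2 ⟨⟨⟨u, h⟩⟩, inferInstance⟩

lemma IsLeaf.not_adj [Finite V] (hv : IsLeaf adj v) : ¬ adj v u := fun h =>
  Nat.card_ne_zero.2 ⟨⟨⟨u, h⟩⟩, inferInstance⟩ hv.2

lemma exists_adj_of_indeg_eq_one (hv : indeg adj v = 1) : ∃ u, adj u v :=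
  let ⟨⟨u, hu⟩⟩ := (Nat.card_eq_one_iff_unique.mp hv).2
  ⟨u, hu⟩

lemma eq_of_adj_of_indeg_eq_one (hv : indeg adj v = 1) (hu : adj u v) (hw : adj w v) : u = w :=
  congrArg Subtype.val <|
    (Nat.card_eq_one_iff_unique.mp hv).1.elim (⟨u, hu⟩ : {x // adj x v}) ⟨w, hw⟩

end Degrees

section TreePaths

variable {V : Type} {adj : V → V → Prop} {u v : V} {l : List V}

lemma IsTreePathToLeaf.eq_cons (hl : IsTreePathToLeaf adj v l) : ∃ t, l = v :: t := by
  obtain ⟨hhead, -⟩ := hl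
  cases l with
  | nil => simp at hhead
  | cons a t => exact ⟨t, by simpa using hhead⟩

lemma isTreePathToLeaf_singleton_iff : IsTreePathToLeaf adj v [v] ↔ IsLeaf adj v := by
  simp [IsTreePathToLeaf, List.Chain']

lemma isTreePathToLeaf_cons_cons_iff [Finite V] :
    IsTreePathToLeaf adj v (v :: u :: l) ↔
      adj v u ∧ (IsTreeNode adj u ∨ IsLeaf adj u) ∧ IsTreePathToLeaf adj u (u :: l) := by
  cases l with
  | nil => simp [IsTreePathToLeaf, List.Chain']; tauto
  | cons a t =>
    have : IsLeaf adj u → ¬ adj u a := IsLeaf.not_adj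
    simp only [IsTreePathToLeaf, List.head?_cons, List.getLast?_cons_cons, List.Chain',
      List.isChain_cons_cons, List.drop_succ_cons, List.drop_zero, List.dropLast_cons_cons,
      List.mem_cons, forall_eq_or_imp, true_and]
    tauto

lemma IsTreePathToLeaf.eq_singleton [Finite V] (hl : IsTreePathToLeaf adj v l)
    (hv : IsLeaf adj v) : l = [v] := by
  obtain ⟨_ | ⟨u, t⟩, rfl⟩ := hl.eq_cons
  · rfl
  · exact absurd (isTreePathToLeaf_cons_cons_iff.1 hl).1 hv.not_adj

lemma IsTreePathToLeaf.cons [Finite V] (hl : IsTreePathToLeaf adj u l) (hvu : adj v u)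
    (hu : IsTreeNode adj u ∨ IsLeaf adj u) : IsTreePathToLeaf adj v (v :: l) := by
  obtain ⟨t, rfl⟩ := hl.eq_cons
  exact isTreePathToLeaf_cons_cons_iff.2 ⟨hvu, hu, hl⟩

lemma IsTreePathToLeaf.exists_cons [Finite V] (hl : IsTreePathToLeaf adj v l)
    (hv : ¬ IsLeaf adj v) :
    ∃ u t, l = v :: t ∧ adj v u ∧ (IsTreeNode adj u ∨ IsLeaf adj u) ∧
      IsTreePathToLeaf adj u t := by
  obtain ⟨_ | ⟨u, t⟩, rfl⟩ := hl.eq_cons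
  · exact absurd (isTreePathToLeaf_singleton_iff.1 hl) hv
  · exact ⟨u, u :: t, rfl, isTreePathToLeaf_cons_cons_iff.1 hl⟩

end TreePaths

section Networks

variable {V : Type} [Finite V] {adj : V → V → Prop} {root u v : V}

lemma IsPhyloNetwork.wellFounded_flip_s19 (hnet : IsPhyloNetwork adj root) :
    WellFounded (flip adj) := by
  have : IsTrans V (flip (Relation.TransGen adj)) := ⟨fun _ _ _ h₁ h₂ => h₂.trans h₁⟩
  have : Std.Irrefl (flip (Relation.TransGen adj)) := ⟨hnet.acyclic⟩
  exact (Finite.wellFounded_of_trans_of_irrefl (flip (Relation.TransGen adj))).mono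
    fun _ _ h => Relation.TransGen.single h

lemma IsPhyloNetwork.not_isReticulation_iff (hnet : IsPhyloNetwork adj root) (h : adj v u) :
    ¬ IsReticulation adj u ↔ IsTreeNode adj u ∨ IsLeaf adj u := by
  have hu : u ≠ root := by
    rintro rfl
    exact indeg_ne_zero_of_adj h hnet.root_indeg
  unfold IsReticulation IsTreeNode IsLeaf
  rcases hnet.node_types u hu with h' | h' | h' <;> omega

lemma IsPhyloNetwork.card_not_isLeaf (hnet : IsPhyloNetwork adj root) :
    Nat.card {v // ¬ IsLeaf adj v} =
      1 + Nat.card {v // IsTreeNode adj v} + Nat.card {v // IsReticulation adj v} := by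
  have hroot := hnet.root_indeg
  have not_isLeaf_iff (v : V) :
      ¬ IsLeaf adj v ↔ v = root ∨ IsTreeNode adj v ∨ IsReticulation adj v := by
    unfold IsLeaf IsTreeNode IsReticulation
    by_cases hv : v = root
    · subst hv; grind
    · have := hnet.node_types v hv; grind
  rw [Nat.card_congr (Equiv.subtypeEquivRight not_isLeaf_iff), Nat.card_subtype_or_of_disjoint,
    Nat.card_subtype_or_of_disjoint, Nat.card_unique, add_assoc]
  · rintro v ⟨h₁, -⟩ ⟨h₂, -⟩; omega
  · rintro v rfl (⟨h, -⟩ | ⟨h, -⟩) <;> omega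

lemma card_isTreeNode_or_isLeaf :
    Nat.card {v // IsTreeNode adj v ∨ IsLeaf adj v} =
      Nat.card {v // IsTreeNode adj v} + Nat.card {v // IsLeaf adj v} :=
  Nat.card_subtype_or_of_disjoint fun _ h₁ h₂ => by unfold IsTreeNode IsLeaf at *; omega

end Networks

section TreeChild

variable {V : Type} [Finite V] {adj : V → V → Prop} {root : V}

lemma IsPhyloNetwork.isTreePathToLeaf_cons (hnet : IsPhyloNetwork adj root) {u v : V}
    {l : List V} (hvu : adj v u) (hu : ¬ IsReticulation adj u)
    (hl : IsTreePathToLeaf adj u l) : IsTreePathToLeaf adj v (v :: l) :=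
  hl.cons hvu ((hnet.not_isReticulation_iff hvu).1 hu)

theorem IsTreeChildNetwork.exists_isTreePathToLeaf (h : IsTreeChildNetwork adj root) (v : V) :
    ∃ l, IsTreePathToLeaf adj v l := by
  induction v using h.1.wellFounded_flip_s19.induction with | _ v ih =>
  by_cases hv : IsLeaf adj v
  · exact ⟨[v], isTreePathToLeaf_singleton_iff.2 hv⟩
  · obtain ⟨u, hvu, hu⟩ := h.2 v hv
    obtain ⟨l, hl⟩ := ih u hvu
    exact ⟨v :: l, h.1.isTreePathToLeaf_cons hvu hu hl⟩

theorem IsTreeChildNetwork.existsUnique_isTreePathToLeaf_iff (h : IsTreeChildNetwork adj root) :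
    (∀ v, ∃! l, IsTreePathToLeaf adj v l) ↔
      ∀ v, {u | adj v u ∧ ¬ IsReticulation adj u}.Subsingleton := by
  constructor
  · intro huniq v u₁ ⟨hvu₁, hu₁⟩ u₂ ⟨hvu₂, hu₂⟩
    obtain ⟨l₁, hl₁⟩ := h.exists_isTreePathToLeaf u₁
    obtain ⟨l₂, hl₂⟩ := h.exists_isTreePathToLeaf u₂
    have hl : l₁ = l₂ := List.cons_injective <| (huniq v).unique
      (h.1.isTreePathToLeaf_cons hvu₁ hu₁ hl₁) (h.1.isTreePathToLeaf_cons hvu₂ hu₂ hl₂)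
    exact Option.some.inj (hl₁.1.symm.trans (hl ▸ hl₂.1))
  · intro hsub v
    induction v using h.1.wellFounded_flip_s19.induction with | _ v ih =>
    by_cases hv : IsLeaf adj v
    · exact ⟨[v], isTreePathToLeaf_singleton_iff.2 hv, fun l hl => hl.eq_singleton hv⟩
    · obtain ⟨u, hvu, hu⟩ := h.2 v hv
      obtain ⟨l, hl, hl_unique⟩ := ih u hvu
      refine ⟨v :: l, h.1.isTreePathToLeaf_cons hvu hu hl, fun l' hl' => ?_⟩
      obtain ⟨u', t, rfl, hvu', hu', ht⟩ := hl'.exists_cons hv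
      obtain rfl : u' = u :=
        hsub v ⟨hvu', (h.1.not_isReticulation_iff hvu').2 hu'⟩ ⟨hvu, hu⟩
      rw [hl_unique t ht]

theorem IsTreeChildNetwork.card_eq_card_not_isLeaf_iff (h : IsTreeChildNetwork adj root) :
    Nat.card {v // IsTreeNode adj v ∨ IsLeaf adj v} = Nat.card {v // ¬ IsLeaf adj v} ↔
      ∀ v, {u | adj v u ∧ ¬ IsReticulation adj u}.Subsingleton := by
  have hpar (x : {v // IsTreeNode adj v ∨ IsLeaf adj v}) : ∃ p, adj p x :=
    exists_adj_of_indeg_eq_one (x.2.elim (·.1) (·.1))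
  choose p hp using hpar
  have hp_not_retic x := (h.1.not_isReticulation_iff (hp x)).2 x.2
  let parent (x : {v // IsTreeNode adj v ∨ IsLeaf adj v}) : {v // ¬ IsLeaf adj v} :=
    ⟨p x, fun hleaf => hleaf.not_adj (hp x)⟩
  have parent_eq {x v} (hvx : adj v x.1) : (parent x).1 = v :=
    eq_of_adj_of_indeg_eq_one (x.2.elim (·.1) (·.1)) (hp x) hvx
  have surj : Function.Surjective parent := by
    rintro ⟨v, hv⟩
    obtain ⟨u, hvu, hu⟩ := h.2 v hv
    exact ⟨⟨u, (h.1.not_isReticulation_iff hvu).1 hu⟩, Subtype.ext (parent_eq hvu)⟩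
  rw [← (Nat.bijective_iff_surjective_and_card parent).trans (and_iff_right surj),
    Function.Bijective, and_iff_left surj]
  constructor
  · intro hinj v u₁ ⟨hvu₁, hu₁⟩ u₂ ⟨hvu₂, hu₂⟩
    have := @hinj ⟨u₁, (h.1.not_isReticulation_iff hvu₁).1 hu₁⟩
      ⟨u₂, (h.1.not_isReticulation_iff hvu₂).1 hu₂⟩
      (Subtype.ext ((parent_eq hvu₁).trans (parent_eq hvu₂).symm))
    exact congrArg Subtype.val this
  · intro hsub x y hxy
    have hpxy : p x = p y := congrArg Subtype.val hxy
    exact Subtype.ext (hsub (p x) ⟨hp x, hp_not_retic x⟩ ⟨hpxy ▸ hp y, hp_not_retic y⟩)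

end TreeChild

theorem treeChild_max_retic_iff_unique_tree_path {V : Type} [Finite V]
    (adj : V → V → Prop) (root : V) (h : IsTreeChildNetwork adj root) (n : ℕ)
    (hn : Nat.card {v : V // IsLeaf adj v} = n) :
    Nat.card {v : V // IsReticulation adj v} = n - 1 ↔
      ∀ v : V, ∃! l : List V, IsTreePathToLeaf adj v l := by
  obtain ⟨l, -, ⟨w, -, hw⟩, -⟩ := h.exists_isTreePathToLeaf root
  have hn_pos : 0 < n := hn ▸ Nat.card_pos_iff.2 ⟨⟨⟨w, hw⟩⟩, inferInstance⟩
  rw [h.existsUnique_isTreePathToLeaf_iff, ← h.card_eq_card_not_isLeaf_iff,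
    card_isTreeNode_or_isLeaf, h.1.card_not_isLeaf, hn]
  omega
end
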